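/- arXiv:2112.14606 — 4 statements merged into one kernel-verified Lean document; each statement's English description precedes it below -/
import Mathlib

section
/- Let e be a fusion and x ∈ ℕ. Define σ_e(z) := min [z]_e, and x* := x if [x]_e = {x}, else x* := min([x]_e \ {x}). Let e\{x} be the fusion obtained by removing x from its class. Then σ_{e\{x}} ∘ (the substitution sending x to x*) = (the substitution sending x to x*) ∘ σ_e as functions ℕ → ℕ. -/
attribute [local instance] Classical.propDecidable

/-- Fusions: equivalence relations on ℕ with finite classes. -/
def IsFusion (e : ℕ → ℕ → Prop) : Prop :=
  Equivalence e ∧ ∀ x : ℕ, {y | e x y}.Finite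

/-- `σ_e(z) := min [z]_e`. -/
noncomputable def sigmaSub (e : ℕ → ℕ → Prop) : ℕ → ℕ :=
  fun z => sInf {y | e z y}

/-- `x*_e := x` if the class of `x` is `{x}`, else the minimum of the class minus `x`. -/
noncomputable def star (e : ℕ → ℕ → Prop) (x : ℕ) : ℕ :=
  if {y | e x y} = {x} then x else sInf ({y | e x y} \ {x})

/-- The substitution `{a := b}`. -/
def subst (a b : ℕ) : ℕ → ℕ := fun z => if z = a then b else z

/-- Removing `x` from its class: `e \ {x}`. -/
def fusionDrop (e : ℕ → ℕ → Prop) (x : ℕ) : ℕ → ℕ → Prop :=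
  fun a b => (e a b ∧ a ≠ x ∧ b ≠ x) ∨ a = b

/-- `σ_{e\{x}} ∘ {x := x*_e} = {x := x*_e} ∘ σ_e`. -/
theorem sigma_drop_comm (e : ℕ → ℕ → Prop) (he : IsFusion e) (x : ℕ) :
    sigmaSub (fusionDrop e x) ∘ subst x (star e x) =
      subst x (star e x) ∘ sigmaSub e := by
  obtain ⟨heq, -⟩ := he
  have hCdrop : ∀ a : ℕ, a ≠ x → {y | fusionDrop e x a y} = {y | e a y} \ {x} := by
    intro a ha
    ext y
    simp only [fusionDrop, Set.mem_setOf_eq, Set.mem_diff, Set.mem_singleton_iff]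
    constructor
    · rintro (⟨h1, -, h3⟩ | rfl)
      · exact ⟨h1, h3⟩
      · exact ⟨heq.refl a, ha⟩
    · rintro ⟨h1, h3⟩
      exact Or.inl ⟨h1, ha, h3⟩
  have hCx : {y | fusionDrop e x x y} = {x} := by
    ext y
    simp only [fusionDrop, Set.mem_setOf_eq, Set.mem_singleton_iff]
    constructor
    · rintro (⟨-, h, -⟩ | rfl)
      · exact absurd rfl h
      · rfl
    · rintro rfl; exact Or.inr rfl
  have hClassEq : ∀ a b : ℕ, e a b → {y | e a y} = {y | e b y} := by
    intro a b hab
    ext y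
    exact ⟨fun h => heq.trans (heq.symm hab) h, fun h => heq.trans hab h⟩
  funext z
  simp only [Function.comp_apply]
  by_cases hz : z = x
  · subst hz
    show sigmaSub (fusionDrop e z) (subst z (star e z) z) = subst z (star e z) (sigmaSub e z)
    rw [subst, if_pos rfl]
    by_cases hsing : {y | e z y} = {z}
    · have hstar : star e z = z := by simp only [_root_.star, if_pos hsing]
      simp [hstar, sigmaSub, hCx, hsing, subst]
    · -- class of z is not a singleton; star e z ∈ class \ {z}
      have hzmem : z ∈ {y | e z y} := heq.refl z
      have hne : ({y | e z y} \ {z}).Nonempty := by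
        by_contra h
        rw [Set.not_nonempty_iff_eq_empty, Set.diff_eq_empty] at h
        exact hsing (le_antisymm h (Set.singleton_subset_iff.mpr hzmem))
      have hstar : star e z = sInf ({y | e z y} \ {z}) := by simp only [_root_.star, if_neg hsing]
      have hstarmem : star e z ∈ {y | e z y} \ {z} := hstar ▸ Nat.sInf_mem hne
      have hstarx : star e z ≠ z := hstarmem.2
      have hCstar : {y | e (star e z) y} = {y | e z y} := hClassEq _ _ (heq.symm hstarmem.1)
      have hL : sigmaSub (fusionDrop e z) (star e z) = sInf ({y | e z y} \ {z}) := by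
        rw [sigmaSub, hCdrop _ hstarx, hCstar]
      set m := sInf {y | e z y} with hm
      have hmmem : m ∈ {y | e z y} := Nat.sInf_mem ⟨z, hzmem⟩
      by_cases hmz : m = z
      · rw [hL, subst]
        simp only [sigmaSub, ← hm, if_pos hmz, hstar]
      · rw [hL, subst]
        simp only [sigmaSub, ← hm, if_neg hmz]
        refine le_antisymm (Nat.sInf_le ⟨hmmem, hmz⟩) ?_
        exact Nat.sInf_le (Nat.sInf_mem hne).1
  · show sigmaSub (fusionDrop e x) (subst x (star e x) z) = subst x (star e x) (sigmaSub e z)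
    rw [subst, if_neg hz]
    have hzmem : z ∈ {y | e z y} := heq.refl z
    have hL : sigmaSub (fusionDrop e x) z = sInf ({y | e z y} \ {x}) := by
      rw [sigmaSub, hCdrop _ hz]
    set m := sInf {y | e z y} with hm
    have hmmem : m ∈ {y | e z y} := Nat.sInf_mem ⟨z, hzmem⟩
    by_cases hmx : m = x
    · -- e z x, so classes of z and x agree, and class of x is not {x}
      have hezx : e z x := hmx ▸ hmmem
      have hCzx : {y | e z y} = {y | e x y} := hClassEq _ _ hezx
      have hzmemx : z ∈ {y | e x y} := heq.symm hezx
      have hsing : {y | e x y} ≠ {x} := by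
        intro h
        exact hz (by rwa [h, Set.mem_singleton_iff] at hzmemx)
      rw [hL, subst]
      simp only [sigmaSub, ← hm]
      rw [if_pos hmx]
      simp only [_root_.star, if_neg hsing, hCzx]
    · rw [hL, subst]
      simp only [sigmaSub, ← hm, if_neg hmx]
      have hne : ({y | e z y} \ {x}).Nonempty := ⟨m, hmmem, hmx⟩
      refine le_antisymm (Nat.sInf_le ⟨hmmem, hmx⟩) ?_
      exact Nat.sInf_le (Nat.sInf_mem hne).1
end

section
/- Let e be a fusion and x, y ∈ ℕ such that either x is not e-equivalent to y, or [x]_e = [y]_e strictly contains {x, y}. Then {x := x*_{e\{y}}} ∘ {y := y*_e} = {y := y*_{e\{x}}} ∘ {x := x*_e} as functions ℕ → ℕ. -/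
attribute [local instance] Classical.propDecidable

lemma diff_nonempty' {s : Set ℕ} {x : ℕ} (hx : x ∈ s) (h : s ≠ {x}) :
    (s \ {x}).Nonempty := by
  rw [Set.nonempty_iff_ne_empty]
  intro hemp
  rw [Set.diff_eq_empty] at hemp
  rcases Set.subset_singleton_iff_eq.mp hemp with h0 | h1
  · exact absurd (h0 ▸ hx) (Set.notMem_empty x)
  · exact h h1

lemma star_spec (e : ℕ → ℕ → Prop) (x : ℕ) (hx : e x x) :
    star e x = x ∨ star e x ∈ {y | e x y} \ {x} := by
  by_cases h : {y | e x y} = {x}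
  · left; unfold _root_.star; rw [if_pos h]
  · right
    have : star e x = sInf ({y | e x y} \ {x}) := by unfold _root_.star; rw [if_neg h]
    rw [this]
    exact Nat.sInf_mem (diff_nonempty' hx h)

lemma star_eq_sInf (e : ℕ → ℕ → Prop) (x : ℕ) (h : {y | e x y} ≠ {x}) :
    star e x = sInf ({y | e x y} \ {x}) := by
  unfold _root_.star; rw [if_neg h]

/-- If `x` is not `e`-equivalent to `y`, or `[x]_e = [y]_e` strictly contains
`{x,y}`, then `{x := x*_{e\{y}}} ∘ {y := y*_e} = {y := y*_{e\{x}}} ∘ {x := x*_e}`. -/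
theorem star_compose_comm (e : ℕ → ℕ → Prop) (he : IsFusion e) (x y : ℕ)
    (h : ¬ e x y ∨
      ({z | e x z} = {z | e y z} ∧ ({x, y} : Set ℕ) ⊂ {z | e x z})) :
    subst x (star (fusionDrop e y) x) ∘ subst y (star e y) =
      subst y (star (fusionDrop e x) y) ∘ subst x (star e x) := by
  obtain ⟨⟨hrefl, hsymm, htrans⟩, hfin⟩ := he
  by_cases hxy : x = y
  · subst hxy; rfl
  have hyx : y ≠ x := fun h'' => hxy h''.symm
  funext z
  simp only [Function.comp_apply, subst]
  by_cases hexy : e x y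
  · -- equal classes, strictly containing {x,y}
    rcases h with h | ⟨hcls, hsub⟩
    · exact absurd hexy h
    have hiff : ∀ w, e y w ↔ e x w := fun w => by
      have := Set.ext_iff.mp hcls w
      simp only [Set.mem_setOf_eq] at this
      tauto
    set C := {z | e x z} with hC
    have hxC : x ∈ C := hrefl x
    have hyC : y ∈ C := hexy
    obtain ⟨w, hwC, hw⟩ := Set.exists_of_ssubset hsub
    have hwx : w ≠ x := fun h' => hw (by simp [h'])
    have hwy : w ≠ y := fun h' => hw (by simp [h'])
    have hne : (C \ {x, y}).Nonempty := ⟨w, hwC, by simp [hwx, hwy]⟩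
    set m := sInf (C \ {x, y}) with hm
    have hmem : m ∈ C \ {x, y} := Nat.sInf_mem hne
    have hmC : m ∈ C := hmem.1
    have hmx : m ≠ x := fun h' => hmem.2 (by simp [h'])
    have hmy : m ≠ y := fun h' => hmem.2 (by simp [h'])
    -- drop classes
    have hdy : {z | fusionDrop e y x z} = C \ {y} := by
      ext z
      simp only [fusionDrop, Set.mem_setOf_eq, Set.mem_diff, Set.mem_singleton_iff]
      constructor
      · rintro (⟨h1, _, h3⟩ | rfl)
        · exact ⟨h1, h3⟩
        · exact ⟨hxC, hxy⟩
      · rintro ⟨h1, h2⟩; exact Or.inl ⟨h1, hxy, h2⟩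
    have hdx : {z | fusionDrop e x y z} = C \ {x} := by
      ext z
      simp only [fusionDrop, Set.mem_setOf_eq, Set.mem_diff, Set.mem_singleton_iff]
      constructor
      · rintro (⟨h1, _, h3⟩ | rfl)
        · exact ⟨(hiff z).mp h1, h3⟩
        · exact ⟨hyC, fun h' => hxy h'.symm⟩
      · rintro ⟨h1, h2⟩
        exact Or.inl ⟨(hiff z).mpr h1, fun h' => hxy h'.symm, h2⟩
    -- stars of dropped relations equal m
    have hsd1 : star (fusionDrop e y) x = m := by
      rw [star_eq_sInf]
      · rw [hdy, hm]
        congr 1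
        ext z; simp only [Set.mem_diff, Set.mem_singleton_iff, Set.mem_insert_iff]
        tauto
      · rw [hdy]
        intro h'
        have : m ∈ ({x} : Set ℕ) := h' ▸ (⟨hmC, hmy⟩ : m ∈ C \ {y})
        exact hmx this
    have hsd2 : star (fusionDrop e x) y = m := by
      rw [star_eq_sInf]
      · rw [hdx, hm]
        congr 1
        ext z; simp only [Set.mem_diff, Set.mem_singleton_iff, Set.mem_insert_iff]
        tauto
      · rw [hdx]
        intro h'
        have : m ∈ ({y} : Set ℕ) := h' ▸ (⟨hmC, hmx⟩ : m ∈ C \ {x})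
        exact hmy this
    -- star e x and star e y
    have hCx : C ≠ {x} := by
      intro h'; exact hxy ((h' ▸ hyC : y ∈ ({x} : Set ℕ))).symm
    have hCy' : C ≠ {y} := by
      intro h'; exact hxy ((h' ▸ hxC : x ∈ ({y} : Set ℕ)))
    have hCy : {z | e y z} ≠ {y} := by rw [← hcls]; exact hCy'
    have hsa : star e x = sInf (C \ {x}) := star_eq_sInf e x hCx
    have hsb : star e y = sInf (C \ {y}) := by
      rw [star_eq_sInf e y hCy, hcls]
    set a := star e x with ha
    set b := star e y with hb
    have haC : a ∈ C \ {x} := hsa ▸ Nat.sInf_mem (diff_nonempty' hxC hCx)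
    have hbC : b ∈ C \ {y} := hsb ▸ Nat.sInf_mem (diff_nonempty' hyC hCy')
    have hAa : a = y ∨ a = m := by
      by_cases h' : a = y
      · exact Or.inl h'
      · right
        have h1 : a ∈ C \ {x, y} := ⟨haC.1, by
          simp only [Set.mem_insert_iff, Set.mem_singleton_iff]
          push_neg
          exact ⟨haC.2, h'⟩⟩
        have h2 : m ≤ a := Nat.sInf_le h1
        have h3 : a ≤ m := hsa ▸ Nat.sInf_le ⟨hmC, hmx⟩
        omega
    have hBb : b = x ∨ b = m := by
      by_cases h' : b = x
      · exact Or.inl h'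
      · right
        have h1 : b ∈ C \ {x, y} := ⟨hbC.1, by
          simp only [Set.mem_insert_iff, Set.mem_singleton_iff]
          push_neg
          exact ⟨h', hbC.2⟩⟩
        have h2 : m ≤ b := Nat.sInf_le h1
        have h3 : b ≤ m := hsb ▸ Nat.sInf_le ⟨hmC, hmy⟩
        omega
    rw [hsd1, hsd2]
    by_cases hzx : z = x
    · rcases hAa with h' | h' <;> simp [hzx, hxy, h', hmy]
    · by_cases hzy : z = y
      · rcases hBb with h' | h' <;> simp [hzy, hzx, hyx, h', hmx]
      · simp [hzx, hzy]
  · -- disjoint classes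
    have hdy : {z | fusionDrop e y x z} = {z | e x z} := by
      ext z
      simp only [fusionDrop, Set.mem_setOf_eq]
      constructor
      · rintro (⟨h1, _, _⟩ | rfl)
        · exact h1
        · exact hrefl x
      · intro h1
        exact Or.inl ⟨h1, hxy, fun h' => hexy (h' ▸ h1)⟩
    have hdx : {z | fusionDrop e x y z} = {z | e y z} := by
      ext z
      simp only [fusionDrop, Set.mem_setOf_eq]
      constructor
      · rintro (⟨h1, _, _⟩ | rfl)
        · exact h1
        · exact hrefl y
      · intro h1
        exact Or.inl ⟨h1, fun h' => hxy h'.symm,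
            fun h' => hexy (hsymm (h' ▸ h1))⟩
    have hs1 : star (fusionDrop e y) x = star e x := by
      unfold _root_.star; rw [hdy]
    have hs2 : star (fusionDrop e x) y = star e y := by
      unfold _root_.star; rw [hdx]
    have hax : star e x ≠ y := by
      rcases star_spec e x (hrefl x) with h' | h'
      · rw [h']; exact hxy
      · intro h''; exact hexy (h'' ▸ h'.1)
    have hby : star e y ≠ x := by
      rcases star_spec e y (hrefl y) with h' | h'
      · rw [h']; exact fun h'' => hxy h''.symm
      · intro h''; exact hexy (hsymm (h'' ▸ h'.1))
    rw [hs1, hs2]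
    by_cases hzx : z = x
    · simp [hzx, hxy, hax]
    · by_cases hzy : z = y
      · simp [hzy, hzx, hyx, hby]
      · simp [hzx, hzy]
end

section
/- Every conjunctive structure (ℂ, ⊗, (·)^⊥, ≼) induces an implicative structure (ℂ, ⊸, ≼) compatible with joins, where a ⊸ b := (a ⊗ b^⊥)^⊥: i.e., ⊸ is antitone in the first argument, monotone in the second, a ⊸ ⋀_{b∈𝔅} b = ⋀_{b∈𝔅}(a ⊸ b), and (⋁_{b∈𝔅} b) ⊸ a = ⋀_{b∈𝔅}(b ⊸ a). -/
/-- A conjunctive structure: a complete lattice with a monotone tensor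
distributing over arbitrary joins in each argument and an antitone involutive
orthogonal satisfying De Morgan for joins. -/
structure ConjStruct (C : Type*) [CompleteLattice C] where
  tens : C → C → C
  neg : C → C
  tens_mono : ∀ {a b c d : C}, a ≤ b → c ≤ d → tens a c ≤ tens b d
  neg_antitone : ∀ {a b : C}, a ≤ b → neg b ≤ neg a
  neg_neg : ∀ a : C, neg (neg a) = a
  tens_sSup_left : ∀ (S : Set C) (a : C), tens (sSup S) a = ⨆ b ∈ S, tens b a
  tens_sSup_right : ∀ (a : C) (S : Set C), tens a (sSup S) = ⨆ b ∈ S, tens a b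
  neg_sSup : ∀ S : Set C, neg (sSup S) = ⨅ b ∈ S, neg b

variable {C : Type*} [CompleteLattice C]

/-- Linear implication `a ⊸ b := (a ⊗ b^⊥)^⊥`. -/
def ConjStruct.imp (𝒞 : ConjStruct C) (a b : C) : C := 𝒞.neg (𝒞.tens a (𝒞.neg b))

/-- Par `a ⅋ b := (a^⊥ ⊗ b^⊥)^⊥`. -/
def ConjStruct.parr (𝒞 : ConjStruct C) (a b : C) : C := 𝒞.neg (𝒞.tens (𝒞.neg a) (𝒞.neg b))

lemma ConjStruct.neg_sInf (𝒞 : ConjStruct C) (S : Set C) :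
    𝒞.neg (sInf S) = ⨆ b ∈ S, 𝒞.neg b := by
  have h := 𝒞.neg_sSup (𝒞.neg '' S)
  have h2 : (⨅ b ∈ 𝒞.neg '' S, 𝒞.neg b) = sInf S := by
    rw [iInf_image]
    simp only [𝒞.neg_neg]
    exact sInf_eq_iInf.symm
  rw [h2] at h
  rw [← h, 𝒞.neg_neg, sSup_image]

/-- Every conjunctive structure induces an implicative structure compatible with
joins, via `a ⊸ b := (a ⊗ b^⊥)^⊥`. -/
theorem conjStruct_implicative (𝒞 : ConjStruct C) :
    (∀ a b c : C, a ≤ b → 𝒞.imp b c ≤ 𝒞.imp a c) ∧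
    (∀ a b c : C, b ≤ c → 𝒞.imp a b ≤ 𝒞.imp a c) ∧
    (∀ (a : C) (𝔅 : Set C), 𝒞.imp a (sInf 𝔅) = ⨅ b ∈ 𝔅, 𝒞.imp a b) ∧
    (∀ (a : C) (𝔅 : Set C), 𝒞.imp (sSup 𝔅) a = ⨅ b ∈ 𝔅, 𝒞.imp b a) := by
  refine ⟨fun a b c hab => ?_, fun a b c hbc => ?_, fun a 𝔅 => ?_, fun a 𝔅 => ?_⟩
  · exact 𝒞.neg_antitone (𝒞.tens_mono hab le_rfl)
  · exact 𝒞.neg_antitone (𝒞.tens_mono le_rfl (𝒞.neg_antitone hbc))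
  · rw [ConjStruct.imp, 𝒞.neg_sInf, ← sSup_image, 𝒞.tens_sSup_right,
      ← sSup_image, 𝒞.neg_sSup]
    simp only [iInf_image, 𝒞.neg_neg]
    rfl
  · rw [ConjStruct.imp, 𝒞.tens_sSup_left, ← sSup_image, 𝒞.neg_sSup]
    simp only [iInf_image]
    rfl
end

section
/- In a conjunctive algebra whose separator 𝒮 contains the combinators S₃ = ⋀_{a,b}(a⊗b ⊸ b⊗a), S₄ = ⋀_{a,b,c}((a⊸b) ⊸ (b⊸c) ⊸ a⊸c), S₅ = ⋀_{a,b,c}((a⊗b)⊗c ⊸ a⊗(b⊗c)) and is upward closed and closed under modus ponens, the element a ⊗ (b ⊗ c) ⊸ (a ⊗ b) ⊗ c belongs to 𝒮 for all a, b, c. -/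
variable {C : Type*} [CompleteLattice C]

/-- If the separator contains `S₃`, `S₄`, `S₅`, is upward closed and closed
under modus ponens, then `a ⊗ (b ⊗ c) ⊸ (a ⊗ b) ⊗ c` belongs to it. -/
theorem separator_assoc_rev (𝒞 : ConjStruct C) (S : Set C)
    (hup : ∀ a b : C, a ≤ b → a ∈ S → b ∈ S)
    (hmp : ∀ a b : C, 𝒞.imp a b ∈ S → a ∈ S → b ∈ S)
    (hS3 : (⨅ a : C, ⨅ b : C, 𝒞.imp (𝒞.tens a b) (𝒞.tens b a)) ∈ S)
    (hS4 : (⨅ a : C, ⨅ b : C, ⨅ c : C,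
        𝒞.imp (𝒞.imp a b) (𝒞.imp (𝒞.imp b c) (𝒞.imp a c))) ∈ S)
    (hS5 : (⨅ a : C, ⨅ b : C, ⨅ c : C,
        𝒞.imp (𝒞.tens (𝒞.tens a b) c) (𝒞.tens a (𝒞.tens b c))) ∈ S) :
    ∀ a b c : C, 𝒞.imp (𝒞.tens a (𝒞.tens b c)) (𝒞.tens (𝒞.tens a b) c) ∈ S := by
  have i3 : ∀ x y : C, 𝒞.imp (𝒞.tens x y) (𝒞.tens y x) ∈ S := fun x y =>
    hup _ _ (le_trans (iInf_le _ x) (iInf_le _ y)) hS3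
  have i5 : ∀ x y z : C, 𝒞.imp (𝒞.tens (𝒞.tens x y) z) (𝒞.tens x (𝒞.tens y z)) ∈ S :=
    fun x y z => hup _ _ (le_trans (iInf_le _ x) (le_trans (iInf_le _ y) (iInf_le _ z))) hS5
  have comp : ∀ x y z : C, 𝒞.imp x y ∈ S → 𝒞.imp y z ∈ S → 𝒞.imp x z ∈ S :=
    fun x y z h1 h2 =>
      hmp _ _ (hmp _ _
        (hup _ _ (le_trans (iInf_le _ x) (le_trans (iInf_le _ y) (iInf_le _ z))) hS4) h1) h2
  intro a b c
  exact comp _ (𝒞.tens (𝒞.tens b c) a) _ (i3 _ _)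
    (comp _ (𝒞.tens b (𝒞.tens c a)) _ (i5 _ _ _)
      (comp _ (𝒞.tens (𝒞.tens c a) b) _ (i3 _ _)
        (comp _ (𝒞.tens c (𝒞.tens a b)) _ (i5 _ _ _) (i3 _ _))))
end
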